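/- Let G be a finite simple connected graph of order n, size m, maximum degree Δ, with p pendent vertices and minimum non-pendent vertex degree δ₁. Then AG(G) ≥ p(δ₁+1)/(2√δ₁) + (1/(2Δ))·(M₁(G) − p(Δ+1)), with equality if and only if G is isomorphic to the star K_{1,n−1}, or G is regular, or G is (Δ,1)-semiregular. -/

import Mathlib

/-!
On an edge `uv`, `(√(d_u/d_v) + √(d_v/d_u))/2 = (d_u + d_v)/(2√(d_u d_v))`. If neither end is
pendent this is at least `(d_u + d_v)/(2Δ)`, with equality iff `d_u = d_v = Δ`. On a pendent edge
with other end of degree `x ≥ δ₁` it equals `(x + 1)/(2√x)`, which increases for `x ≥ 1`, so it is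
at least `(δ₁ + 1)/(2√δ₁) + (x - Δ)/(2Δ)`, with equality iff `x = δ₁ = Δ`. A connected graph with a
vertex of degree at least 2 has no edge joining two pendent vertices, so it has exactly `p`
pendent edges and the termwise bounds add up to the claimed one. Equality thus forces every degree
to be `1` or `Δ`, which is the star, regular or `(Δ, 1)`-semiregular case.
-/

open SimpleGraph

/-- The degree of a vertex, as a natural number (classical, to avoid decidability assumptions). -/
noncomputable def ndeg {V : Type*} [Fintype V] (G : SimpleGraph V) (v : V) : ℕ :=
  letI := Classical.decRel G.Adj
  G.degree v

/-- The degree of a vertex, as a real number. -/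
noncomputable def deg {V : Type*} [Fintype V] (G : SimpleGraph V) (v : V) : ℝ :=
  (ndeg G v : ℝ)

/-- For a symmetric function `f`, `edgeSum G f = Σ_{uv ∈ E(G)} f (d_u) (d_v)`:
each unordered edge is counted twice in the double sum, hence the factor `1/2`. -/
noncomputable def edgeSum {V : Type*} [Fintype V] (G : SimpleGraph V) (f : ℝ → ℝ → ℝ) : ℝ :=
  letI := Classical.decRel G.Adj
  (1 / 2) * ∑ u : V, ∑ w : V, if G.Adj u w then f (deg G u) (deg G w) else 0

/-- The arithmetic-geometric index `AG(G) = Σ_{uv ∈ E(G)} (1/2)(√(d_u/d_v) + √(d_v/d_u))`. -/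
noncomputable def AG {V : Type*} [Fintype V] (G : SimpleGraph V) : ℝ :=
  edgeSum G (fun x y => (Real.sqrt (x / y) + Real.sqrt (y / x)) / 2)

/-- The first geometric-arithmetic index `GA(G) = Σ_{uv ∈ E(G)} 2√(d_u d_v)/(d_u + d_v)`. -/
noncomputable def GA {V : Type*} [Fintype V] (G : SimpleGraph V) : ℝ :=
  edgeSum G (fun x y => 2 * Real.sqrt (x * y) / (x + y))

/-- The forgotten index `F(G) = Σ_{uv ∈ E(G)} (d_u² + d_v²)`. -/
noncomputable def forgottenIndex {V : Type*} [Fintype V] (G : SimpleGraph V) : ℝ :=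
  edgeSum G (fun x y => x ^ 2 + y ^ 2)

/-- The first Zagreb index `M₁(G) = Σ_{uv ∈ E(G)} (d_u + d_v)`. -/
noncomputable def M1 {V : Type*} [Fintype V] (G : SimpleGraph V) : ℝ :=
  edgeSum G (fun x y => x + y)

/-- The second Zagreb index `M₂(G) = Σ_{uv ∈ E(G)} d_u d_v`. -/
noncomputable def M2 {V : Type*} [Fintype V] (G : SimpleGraph V) : ℝ :=
  edgeSum G (fun x y => x * y)

/-- The symmetric division deg index `SDD(G) = Σ_{uv ∈ E(G)} (d_u/d_v + d_v/d_u)`. -/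
noncomputable def SDD {V : Type*} [Fintype V] (G : SimpleGraph V) : ℝ :=
  edgeSum G (fun x y => x / y + y / x)

/-- The atom-bond connectivity index `ABC(G) = Σ_{uv ∈ E(G)} √((d_u + d_v − 2)/(d_u d_v))`. -/
noncomputable def ABC {V : Type*} [Fintype V] (G : SimpleGraph V) : ℝ :=
  edgeSum G (fun x y => Real.sqrt ((x + y - 2) / (x * y)))

/-- `G` is `(s,r)`-semiregular: its vertex set is the disjoint union of two nonempty sets,
all vertices of the first having degree `s` and all vertices of the second degree `r`. -/
def IsSemiregular {V : Type*} [Fintype V] (G : SimpleGraph V) (s r : ℕ) : Prop :=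
  ∃ V₁ V₂ : Set V, V₁.Nonempty ∧ V₂.Nonempty ∧ Disjoint V₁ V₂ ∧ V₁ ∪ V₂ = Set.univ ∧
    (∀ v ∈ V₁, ndeg G v = s) ∧ (∀ v ∈ V₂, ndeg G v = r)

open Real Finset

noncomputable def agTerm (x y : ℝ) : ℝ := (√(x / y) + √(y / x)) / 2

lemma agTerm_eq {x y : ℝ} (hx : 0 < x) (hy : 0 < y) : agTerm x y = (x + y) / (2 * √(x * y)) := by
  rw [agTerm, sqrt_div hx.le, sqrt_div hy.le, sqrt_mul hx.le]
  field_simp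
  rw [sq_sqrt hx.le, sq_sqrt hy.le]

lemma agTerm_comm (x y : ℝ) : agTerm x y = agTerm y x := by
  rw [agTerm, agTerm, add_comm]

lemma strictMonoOn_add_one_div_two_sqrt :
    StrictMonoOn (fun t : ℝ => (t + 1) / (2 * √t)) (Set.Ici 1) := by
  intro a ha b hb hab
  have ha' : (1:ℝ) ≤ √a := one_le_sqrt.2 ha
  have hab' : √a < √b := sqrt_lt_sqrt (by linarith [Set.mem_Ici.1 ha]) hab
  have hsa := sq_sqrt (show 0 ≤ a by linarith [Set.mem_Ici.1 ha])
  have hsb := sq_sqrt (show 0 ≤ b by linarith [Set.mem_Ici.1 hb])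
  dsimp only
  rw [div_lt_div_iff₀ (by linarith) (by linarith)]
  nlinarith [mul_pos (sub_pos.2 hab') (show 0 < √a * √b - 1 by nlinarith)]

lemma le_add_one_div_two_sqrt {δ Δ x : ℝ} (hδ : 1 ≤ δ) (hδx : δ ≤ x) (hxΔ : x ≤ Δ) :
    (δ + 1) / (2 * √δ) + (x - Δ) / (2 * Δ) ≤ (x + 1) / (2 * √x) ∧
      ((δ + 1) / (2 * √δ) + (x - Δ) / (2 * Δ) = (x + 1) / (2 * √x) ↔ x = δ ∧ x = Δ) := by
  have hmono := strictMonoOn_add_one_div_two_sqrt.le_iff_le (a := δ) (b := x) hδ (hδ.trans hδx)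
  have hinj := strictMonoOn_add_one_div_two_sqrt.injOn.eq_iff (x := x) (y := δ)
    (hδ.trans hδx) hδ
  have hΔ : 0 < 2 * Δ := by linarith
  have hgap : (x - Δ) / (2 * Δ) ≤ 0 := div_nonpos_of_nonpos_of_nonneg (by linarith) hΔ.le
  have hgap_eq : (x - Δ) / (2 * Δ) = 0 ↔ x = Δ := by
    rw [div_eq_zero_iff, sub_eq_zero, or_iff_left hΔ.ne']
  have hle := hmono.2 hδx
  refine ⟨by linarith, ⟨fun h => ?_, fun ⟨hxδ, hxΔ'⟩ => ?_⟩⟩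
  · exact ⟨hinj.1 (by linarith), hgap_eq.1 (by linarith)⟩
  · rw [hgap_eq.2 hxΔ', hxδ, add_zero]

lemma add_div_le_add_div_sqrt_mul {Δ x y : ℝ} (hx : 0 < x) (hy : 0 < y) (hxΔ : x ≤ Δ)
    (hyΔ : y ≤ Δ) :
    (x + y) / (2 * Δ) ≤ (x + y) / (2 * √(x * y)) ∧
      ((x + y) / (2 * Δ) = (x + y) / (2 * √(x * y)) ↔ x = Δ ∧ y = Δ) := by
  have hsqrt : √(x * y) ≤ Δ := sqrt_le_iff.2 ⟨by linarith, by nlinarith⟩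
  have hpos : 0 < √(x * y) := sqrt_pos.2 (mul_pos hx hy)
  refine ⟨div_le_div_of_nonneg_left (by positivity) (by positivity) (by linarith), ?_⟩
  rw [div_eq_div_iff (by linarith) (by positivity)]
  constructor
  · intro h
    have hΔ : √(x * y) = Δ := by nlinarith
    have hxy : x * y = Δ ^ 2 := by rw [← hΔ, sq_sqrt (mul_pos hx hy).le]
    constructor <;> nlinarith
  · rintro ⟨rfl, rfl⟩
    rw [sqrt_mul_self hx.le]

/-- Termwise lower bound for `agTerm` on an edge with end-degrees `x, y`: pendent edges carry an
extra constant, chosen so that the sum over all edges is the right-hand side of the theorem. -/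
noncomputable def agLowerBound (δ Δ x y : ℝ) : ℝ :=
  (x + y) / (2 * Δ) + if x = 1 ∨ y = 1 then (δ + 1) / (2 * √δ) - (Δ + 1) / (2 * Δ) else 0

lemma agLowerBound_comm (δ Δ x y : ℝ) : agLowerBound δ Δ x y = agLowerBound δ Δ y x := by
  simp only [agLowerBound, add_comm x, or_comm]

lemma agLowerBound_one_left (δ Δ y : ℝ) :
    agLowerBound δ Δ 1 y = (δ + 1) / (2 * √δ) + (y - Δ) / (2 * Δ) := by
  rw [agLowerBound, if_pos (Or.inl rfl)]
  ring

lemma agTerm_one_left {y : ℝ} (hy : 0 < y) : agTerm 1 y = (y + 1) / (2 * √y) := by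
  rw [agTerm_eq one_pos hy, one_mul, add_comm]

lemma agLowerBound_le_agTerm {δ Δ x y : ℝ} (hδ : 1 ≤ δ) (hx : x = 1 ∨ δ ≤ x) (hy : y = 1 ∨ δ ≤ y)
    (hxy : x ≠ 1 ∨ y ≠ 1) (hxΔ : x ≤ Δ) (hyΔ : y ≤ Δ) :
    agLowerBound δ Δ x y ≤ agTerm x y ∧ (agLowerBound δ Δ x y = agTerm x y → x = 1 ∨ x = Δ) := by
  by_cases hx1 : x = 1
  · subst hx1
    have hδy := hy.resolve_left (hxy.resolve_left (not_not.2 rfl))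
    rw [agLowerBound_one_left, agTerm_one_left (by linarith)]
    exact ⟨(le_add_one_div_two_sqrt hδ hδy hyΔ).1, fun _ => Or.inl rfl⟩
  have hδx := hx.resolve_left hx1
  by_cases hy1 : y = 1
  · subst hy1
    rw [agLowerBound_comm, agTerm_comm, agLowerBound_one_left, agTerm_one_left (by linarith)]
    obtain ⟨hle, heq⟩ := le_add_one_div_two_sqrt hδ hδx hxΔ
    exact ⟨hle, fun h => Or.inr (heq.1 h).2⟩
  have hδy := hy.resolve_left hy1
  rw [agLowerBound, if_neg (by tauto), add_zero, agTerm_eq (by linarith) (by linarith)]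
  obtain ⟨hle, heq⟩ := add_div_le_add_div_sqrt_mul (by linarith) (by linarith) hxΔ hyΔ
  exact ⟨hle, fun h => Or.inr (heq.1 h).1⟩

lemma agLowerBound_self_eq_agTerm {Δ x y : ℝ} (hΔ : 0 < Δ) (hx : x = 1 ∨ x = Δ)
    (hy : y = 1 ∨ y = Δ) (hxy : x ≠ 1 ∨ y ≠ 1) : agLowerBound Δ Δ x y = agTerm x y := by
  have hpendant : agLowerBound Δ Δ 1 Δ = agTerm 1 Δ := by
    rw [agLowerBound_one_left, agTerm_one_left hΔ, sub_self, zero_div, add_zero]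
  rcases hx with rfl | rfl <;> rcases hy with rfl | rfl
  · exact absurd hxy (by simp)
  · exact hpendant
  · rw [agLowerBound_comm, agTerm_comm, hpendant]
  · rw [agLowerBound, if_neg (by tauto), agTerm, div_self hΔ.ne']
    field_simp
    norm_num

lemma SimpleGraph.Preconnected.mem_of_adj_closed {V : Type*} {G : SimpleGraph V}
    (hG : G.Preconnected) {s : Set V} (hs : ∀ ⦃x y⦄, x ∈ s → G.Adj x y → y ∈ s) {u : V}
    (hu : u ∈ s) (v : V) : v ∈ s := by
  have huv := hG u v
  rw [reachable_eq_reflTransGen] at huv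
  induction huv with
  | refl => exact hu
  | tail _ hxy ih => exact hs ih hxy

section

variable {V : Type*} [Fintype V] {G : SimpleGraph V} {δ₁ Δ : ℕ}

lemma ndeg_eq_degree [DecidableRel G.Adj] (v : V) : ndeg G v = G.degree v := by
  unfold ndeg
  congr!

lemma deg_eq_one_iff {v : V} : deg G v = 1 ↔ ndeg G v = 1 := Nat.cast_eq_one

lemma edgeSum_eq [DecidableRel G.Adj] (f : ℝ → ℝ → ℝ) :
    edgeSum G f = 1 / 2 * ∑ u, ∑ w, if G.Adj u w then f (deg G u) (deg G w) else 0 := by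
  unfold edgeSum
  congr!

lemma edgeSum_le_edgeSum {f g : ℝ → ℝ → ℝ}
    (h : ∀ u w, G.Adj u w → f (deg G u) (deg G w) ≤ g (deg G u) (deg G w)) :
    edgeSum G f ≤ edgeSum G g := by
  classical
  rw [edgeSum_eq, edgeSum_eq]
  gcongr with u _ w _
  split_ifs with huw
  exacts [h u w huw, le_rfl]

lemma edgeSum_eq_edgeSum_iff {f g : ℝ → ℝ → ℝ}
    (h : ∀ u w, G.Adj u w → f (deg G u) (deg G w) ≤ g (deg G u) (deg G w)) :
    edgeSum G f = edgeSum G g ↔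
      ∀ u w, G.Adj u w → f (deg G u) (deg G w) = g (deg G u) (deg G w) := by
  classical
  have hle : ∀ u w, (if G.Adj u w then f (deg G u) (deg G w) else 0) ≤
      if G.Adj u w then g (deg G u) (deg G w) else 0 := fun u w => by
    split_ifs with huw
    exacts [h u w huw, le_rfl]
  rw [edgeSum_eq, edgeSum_eq, mul_right_inj' (by norm_num),
    sum_eq_sum_iff_of_le fun u _ => sum_le_sum fun w _ => hle u w]
  simp only [mem_univ, forall_const, sum_eq_sum_iff_of_le fun w _ => hle _ w]
  refine forall₂_congr fun u w => ?_
  split_ifs with huw <;> simp [huw]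

lemma edgeSum_congr {f g : ℝ → ℝ → ℝ}
    (h : ∀ u w, G.Adj u w → f (deg G u) (deg G w) = g (deg G u) (deg G w)) :
    edgeSum G f = edgeSum G g :=
  (edgeSum_eq_edgeSum_iff fun u w huw => (h u w huw).le).2 h

lemma edgeSum_add (f g : ℝ → ℝ → ℝ) :
    edgeSum G (fun x y => f x y + g x y) = edgeSum G f + edgeSum G g := by
  classical
  simp only [edgeSum_eq, ← mul_add, ← sum_add_distrib, ite_add_ite, add_zero]

lemma edgeSum_div_const (f : ℝ → ℝ → ℝ) (c : ℝ) :
    edgeSum G (fun x y => f x y / c) = edgeSum G f / c := by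
  classical
  simp only [edgeSum_eq, mul_div_assoc, sum_div, ite_div, zero_div]

lemma edgeSum_add_apply (a : ℝ → ℝ) :
    edgeSum G (fun x y => a x + a y) = ∑ v, deg G v * a (deg G v) := by
  classical
  have hleft : ∀ u, ∑ w, (if G.Adj u w then a (deg G u) else 0) = deg G u * a (deg G u) := by
    intro u
    rw [← sum_filter, sum_const, nsmul_eq_mul, ← G.neighborFinset_eq_filter,
      G.card_neighborFinset_eq_degree, deg, ndeg_eq_degree]
  have hright : ∑ u, ∑ w, (if G.Adj u w then a (deg G w) else 0) = ∑ v, deg G v * a (deg G v) := by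
    rw [sum_comm]
    simp only [G.adj_comm _ (_ : V), hleft]
  rw [edgeSum_add (fun x _ => a x) (fun _ y => a y), edgeSum_eq, edgeSum_eq, hright]
  simp only [hleft]
  ring

lemma sum_deg_mul_ite_deg_eq_one (c : ℝ) :
    ∑ v, deg G v * (if deg G v = 1 then c else 0) = {v | ndeg G v = 1}.ncard * c := by
  classical
  have hterm : ∀ v, deg G v * (if deg G v = 1 then c else 0) = if ndeg G v = 1 then c else 0 :=
    fun v => by by_cases h : ndeg G v = 1 <;> simp [deg, h]
  rw [sum_congr rfl fun v _ => hterm v, ← sum_filter, sum_const, nsmul_eq_mul,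
    Set.ncard_eq_toFinset_card', Set.toFinset_ofPred]

lemma edgeSum_agLowerBound (δ Δ : ℝ) (hpend : ∀ u w, G.Adj u w → ndeg G u ≠ 1 ∨ ndeg G w ≠ 1) :
    edgeSum G (agLowerBound δ Δ) = ({v | ndeg G v = 1}.ncard : ℝ) * (δ + 1) / (2 * √δ) +
      1 / (2 * Δ) * (M1 G - {v | ndeg G v = 1}.ncard * (Δ + 1)) := by
  set C := (δ + 1) / (2 * √δ) - (Δ + 1) / (2 * Δ)
  have hsplit : edgeSum G (agLowerBound δ Δ) = edgeSum G fun x y =>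
      (x + y) / (2 * Δ) + ((if x = 1 then C else 0) + (if y = 1 then C else 0)) := by
    refine edgeSum_congr fun u w huw => ?_
    rw [agLowerBound]
    have := hpend u w huw
    simp only [ne_eq, ← deg_eq_one_iff (G := G)] at this
    split_ifs <;> simp_all [C]
  rw [hsplit, edgeSum_add (fun x y => (x + y) / (2 * Δ)), edgeSum_div_const,
    edgeSum_add_apply (fun x => if x = 1 then C else 0), sum_deg_mul_ite_deg_eq_one]
  simp only [M1, C]
  ring

lemma ndeg_pos_iff_exists_adj {v : V} : 0 < ndeg G v ↔ ∃ w, G.Adj v w := by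
  classical
  rw [ndeg_eq_degree]
  exact G.degree_pos_iff_exists_adj v

lemma SimpleGraph.Connected.ndeg_pos (hG : G.Connected) {v₀ : V} (h : 0 < ndeg G v₀) (v : V) :
    0 < ndeg G v := by
  classical
  obtain ⟨w, hw⟩ := ndeg_pos_iff_exists_adj.1 h
  have : Nontrivial V := ⟨⟨v₀, w, hw.ne⟩⟩
  rw [ndeg_eq_degree]
  exact hG.preconnected.degree_pos_of_nontrivial v

lemma SimpleGraph.Connected.ndeg_ne_one_or_ndeg_ne_one_of_adj (hG : G.Connected) {v₀ : V}
    (h : 2 ≤ ndeg G v₀) {u w : V} (huw : G.Adj u w) : ndeg G u ≠ 1 ∨ ndeg G w ≠ 1 := by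
  classical
  by_contra! hpend
  obtain ⟨hu, hw⟩ := hpend
  have hclosed : ∀ ⦃x y⦄, x ∈ ({u, w} : Set V) → G.Adj x y → y ∈ ({u, w} : Set V) := by
    rw [ndeg_eq_degree, degree_eq_one_iff_existsUnique_adj] at hu hw
    rintro x y (rfl | rfl) hxy
    · exact Or.inr (hu.unique hxy huw)
    · exact Or.inl (hw.unique hxy huw.symm)
  rcases hG.preconnected.mem_of_adj_closed hclosed (Or.inl rfl) v₀ with rfl | rfl <;> omega

lemma SimpleGraph.Connected.deg_ne_one_or_deg_ne_one_of_adj (hG : G.Connected) {v₀ : V}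
    (h : 2 ≤ ndeg G v₀) {u w : V} (huw : G.Adj u w) : deg G u ≠ 1 ∨ deg G w ≠ 1 := by
  simpa only [ne_eq, deg_eq_one_iff] using hG.ndeg_ne_one_or_ndeg_ne_one_of_adj h huw

lemma ndeg_eq_one_of_iso_completeBipartiteGraph {β : Type*} [Fintype β]
    (φ : G ≃g completeBipartiteGraph (Fin 1) β) {v : V} {j : β} (hv : φ v = Sum.inr j) :
    ndeg G v = 1 := by
  classical
  rw [ndeg_eq_degree, ← φ.degree_eq v, hv, degree_eq_one_iff_existsUnique_adj]
  refine ⟨Sum.inl 0, by simp, ?_⟩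
  rintro (i | i) h
  · rw [Subsingleton.elim i 0]
  · simp at h

lemma ndeg_eq_one_or_eq_of_iso_completeBipartiteGraph {β : Type*} [Fintype β]
    (φ : G ≃g completeBipartiteGraph (Fin 1) β) (hΔ : IsGreatest (Set.range (ndeg G)) Δ)
    (hΔ2 : 2 ≤ Δ) (v : V) : ndeg G v = 1 ∨ ndeg G v = Δ := by
  obtain ⟨c, hc⟩ := hΔ.1
  rcases hv : φ v with i | j
  · rcases hc' : φ c with i' | j'
    · rw [φ.injective (hv.trans (hc'.trans (congrArg Sum.inl (Subsingleton.elim _ _))).symm)]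
      exact Or.inr hc
    · have := ndeg_eq_one_of_iso_completeBipartiteGraph φ hc'
      omega
  · exact Or.inl (ndeg_eq_one_of_iso_completeBipartiteGraph φ hv)

lemma forall_ndeg_eq_one_or_eq_iff (hΔ : IsGreatest (Set.range (ndeg G)) Δ) (hΔ2 : 2 ≤ Δ)
    (n : ℕ) : (∀ v, ndeg G v = 1 ∨ ndeg G v = Δ) ↔
      Nonempty (G ≃g completeBipartiteGraph (Fin 1) (Fin (n - 1))) ∨
        (∃ r, ∀ v : V, ndeg G v = r) ∨ IsSemiregular G Δ 1 := by
  constructor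
  · intro h
    by_cases hpend : ∃ v, ndeg G v = 1
    · refine Or.inr (Or.inr ⟨{v | ndeg G v = Δ}, {v | ndeg G v = 1}, ?_, hpend, ?_, ?_,
        fun v hv => hv, fun v hv => hv⟩)
      · obtain ⟨c, hc⟩ := hΔ.1
        exact ⟨c, hc⟩
      · exact Set.disjoint_left.2 fun v (hv : _ = Δ) (hv' : _ = 1) => by omega
      · exact Set.eq_univ_of_forall fun v => (h v).symm
    · simp only [not_exists] at hpend
      exact Or.inr (Or.inl ⟨Δ, fun v => (h v).resolve_left (hpend v)⟩)
  · rintro (hstar | ⟨r, hr⟩ | ⟨V₁, V₂, -, -, -, hcover, hV₁, hV₂⟩) v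
    · exact ndeg_eq_one_or_eq_of_iso_completeBipartiteGraph hstar.some hΔ hΔ2 v
    · obtain ⟨c, hc⟩ := hΔ.1
      exact Or.inr ((hr v).trans ((hr c).symm.trans hc))
    · have hv : v ∈ V₁ ∪ V₂ := hcover ▸ Set.mem_univ v
      exact hv.elim (fun hv => Or.inr (hV₁ v hv)) (fun hv => Or.inl (hV₂ v hv))

lemma AG_eq_edgeSum_agTerm : AG G = edgeSum G agTerm := rfl

lemma ndeg_eq_one_or_le (hG : G.Connected)
    (hδ₁ : IsLeast {d : ℕ | ∃ v : V, ndeg G v = d ∧ 2 ≤ d} δ₁) (v : V) :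
    ndeg G v = 1 ∨ δ₁ ≤ ndeg G v := by
  obtain ⟨v₀, hv₀, h2⟩ := hδ₁.1
  have hpos := hG.ndeg_pos (v₀ := v₀) (by omega) v
  rcases (show ndeg G v = 1 ∨ 2 ≤ ndeg G v by omega) with h | h
  exacts [Or.inl h, Or.inr (hδ₁.2 ⟨v, rfl, h⟩)]

lemma agLowerBound_le_agTerm_of_adj (hG : G.Connected) (hΔ : IsGreatest (Set.range (ndeg G)) Δ)
    (hδ₁ : IsLeast {d : ℕ | ∃ v : V, ndeg G v = d ∧ 2 ≤ d} δ₁) {u w : V} (huw : G.Adj u w) :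
    agLowerBound δ₁ Δ (deg G u) (deg G w) ≤ agTerm (deg G u) (deg G w) ∧
      (agLowerBound δ₁ Δ (deg G u) (deg G w) = agTerm (deg G u) (deg G w) →
        ndeg G u = 1 ∨ ndeg G u = Δ) := by
  obtain ⟨v₀, hv₀, h2⟩ := hδ₁.1
  have hdeg : ∀ v, deg G v = 1 ∨ (δ₁ : ℝ) ≤ deg G v := fun v =>
    (ndeg_eq_one_or_le hG hδ₁ v).imp deg_eq_one_iff.2 fun h => Nat.cast_le.2 h
  have hdegΔ : ∀ v, deg G v ≤ Δ := fun v => Nat.cast_le.2 (hΔ.2 ⟨v, rfl⟩)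
  obtain ⟨hle, htight⟩ := agLowerBound_le_agTerm (by exact_mod_cast (show 1 ≤ δ₁ by omega))
    (hdeg u) (hdeg w) (hG.deg_ne_one_or_deg_ne_one_of_adj (v₀ := v₀) (by omega) huw)
    (hdegΔ u) (hdegΔ w)
  exact ⟨hle, fun h => (htight h).imp deg_eq_one_iff.1 Nat.cast_inj.1⟩

lemma edgeSum_agLowerBound_eq_AG_iff (hG : G.Connected) (hΔ : IsGreatest (Set.range (ndeg G)) Δ)
    (hδ₁ : IsLeast {d : ℕ | ∃ v : V, ndeg G v = d ∧ 2 ≤ d} δ₁) :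
    edgeSum G (agLowerBound δ₁ Δ) = AG G ↔ ∀ v, ndeg G v = 1 ∨ ndeg G v = Δ := by
  obtain ⟨v₀, hv₀, h2⟩ := hδ₁.1
  rw [AG_eq_edgeSum_agTerm,
    edgeSum_eq_edgeSum_iff fun u w huw => (agLowerBound_le_agTerm_of_adj hG hΔ hδ₁ huw).1]
  constructor
  · intro h v
    obtain ⟨w, hw⟩ := ndeg_pos_iff_exists_adj.1 (hG.ndeg_pos (v₀ := v₀) (by omega) v)
    exact (agLowerBound_le_agTerm_of_adj hG hΔ hδ₁ hw).2 (h v w hw)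
  · intro h u w huw
    obtain rfl : δ₁ = Δ := by rcases h v₀ with h | h <;> omega
    have hdeg : ∀ v, deg G v = 1 ∨ deg G v = δ₁ := fun v => by
      rcases h v with h | h <;> simp [deg, h]
    exact agLowerBound_self_eq_agTerm (by positivity) (hdeg u) (hdeg w)
      (hG.deg_ne_one_or_deg_ne_one_of_adj (v₀ := v₀) (by omega) huw)

end

theorem stmt9_general {V : Type*} [Fintype V] (G : SimpleGraph V) (hG : G.Connected)
    (n p Δ δ₁ : ℕ)
    (hp : {v : V | ndeg G v = 1}.ncard = p)
    (hΔ : IsGreatest (Set.range (ndeg G)) Δ)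
    (hδ₁ : IsLeast {d : ℕ | ∃ v : V, ndeg G v = d ∧ 2 ≤ d} δ₁) :
    AG G ≥ (p : ℝ) * ((δ₁ : ℝ) + 1) / (2 * Real.sqrt δ₁) +
      (1 / (2 * (Δ : ℝ))) * (M1 G - p * ((Δ : ℝ) + 1)) ∧
    (AG G = (p : ℝ) * ((δ₁ : ℝ) + 1) / (2 * Real.sqrt δ₁) +
      (1 / (2 * (Δ : ℝ))) * (M1 G - p * ((Δ : ℝ) + 1)) ↔
      Nonempty (G ≃g completeBipartiteGraph (Fin 1) (Fin (n - 1))) ∨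
      (∃ r, ∀ v : V, ndeg G v = r) ∨ IsSemiregular G Δ 1) := by
  obtain ⟨v₀, hv₀, h2⟩ := hδ₁.1
  have hpend : ∀ u w, G.Adj u w → ndeg G u ≠ 1 ∨ ndeg G w ≠ 1 := fun _ _ =>
    hG.ndeg_ne_one_or_ndeg_ne_one_of_adj (v₀ := v₀) (by omega)
  have hΔ2 : 2 ≤ Δ := h2.trans (hv₀ ▸ hΔ.2 ⟨v₀, rfl⟩)
  subst hp
  rw [← edgeSum_agLowerBound _ _ hpend]
  refine ⟨edgeSum_le_edgeSum fun u w huw => (agLowerBound_le_agTerm_of_adj hG hΔ hδ₁ huw).1, ?_⟩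
  rw [eq_comm, edgeSum_agLowerBound_eq_AG_iff hG hΔ hδ₁]
  exact forall_ndeg_eq_one_or_eq_iff hΔ hΔ2 n

/-- Theorem 6 of the paper: lower bound on `AG` via `M₁`. -/
theorem stmt9 {V : Type*} [Fintype V] (G : SimpleGraph V) (hG : G.Connected)
    (n m p Δ δ₁ : ℕ)
    (hn : Fintype.card V = n) (hm : G.edgeSet.ncard = m)
    (hp : {v : V | ndeg G v = 1}.ncard = p)
    (hΔ : IsGreatest (Set.range (ndeg G)) Δ)
    (hδ₁ : IsLeast {d : ℕ | ∃ v : V, ndeg G v = d ∧ 2 ≤ d} δ₁) :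
    AG G ≥ (p : ℝ) * ((δ₁ : ℝ) + 1) / (2 * Real.sqrt δ₁) +
      (1 / (2 * (Δ : ℝ))) * (M1 G - p * ((Δ : ℝ) + 1)) ∧
    (AG G = (p : ℝ) * ((δ₁ : ℝ) + 1) / (2 * Real.sqrt δ₁) +
      (1 / (2 * (Δ : ℝ))) * (M1 G - p * ((Δ : ℝ) + 1)) ↔
      Nonempty (G ≃g completeBipartiteGraph (Fin 1) (Fin (n - 1))) ∨
      (∃ r, ∀ v : V, ndeg G v = r) ∨ IsSemiregular G Δ 1) :=
  stmt9_general G hG n p Δ δ₁ hp hΔ hδ₁
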